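/- Let (k_j)_{j≥1} be a sequence of even natural numbers with k_1 ≥ 6 and k_{j+1} - k_j ≥ 6 for all j. Define a_0 = a_1 = 1, a_k = 2 if k = k_j - 1 or k = k_j + 1 for some j, and a_k = 4 otherwise. Then for the convergents s_k/t_k of [a_0,a_1,a_2,...], all denominators t_k are odd and the Jacobi symbol (s_k/t_k) equals 1 for every k ≥ 0. -/

import Mathlib

/-- Numerators of continued fraction convergents: `cfS a k = s_k`
(with `s_{-1} = 1`, `s_0 = a_0`, `s_k = a_k s_{k-1} + s_{k-2}`). -/
def cfS (a : ℕ → ℤ) : ℕ → ℤ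
  | 0 => a 0
  | 1 => a 1 * a 0 + 1
  | (k+2) => a (k+2) * cfS a (k+1) + cfS a k

/-- Denominators of continued fraction convergents: `cfT a k = t_k`
(with `t_{-1} = 0`, `t_0 = 1`, `t_k = a_k t_{k-1} + t_{k-2}`). -/
def cfT (a : ℕ → ℤ) : ℕ → ℤ
  | 0 => 1
  | 1 => a 1
  | (k+2) => a (k+2) * cfT a (k+1) + cfT a k

/-!
Every partial quotient `a_n` with `n ≥ 2` is `2` or `4`, and it is `4` at
even `n` because the `k_j ± 1` are odd. Hence all `t_n` are odd and `t_n ≡ 1 (mod 4)` for even `n`.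
Since `t_{n+2} ≡ t_n (mod t_{n+1})` and one of two consecutive denominators is `1 mod 4`,
reciprocity gives `(t_n / t_{n+1}) = 1` by induction. Finally `s_{n+1} t_n ≡ (-1)^n (mod t_{n+1})`,
so `(s_{n+1} / t_{n+1}) = ((-1)^n / t_{n+1})`, which is `1` because `n + 1` is even when `n` is odd.
-/

theorem jacobiSym_comm_of_emod_four {x y : ℤ} (hx : 0 ≤ x) (hy : 0 ≤ y) (hxo : Odd x)
    (hyo : Odd y) (h : x % 4 = 1 ∨ y % 4 = 1) : jacobiSym x y.natAbs = jacobiSym y x.natAbs := by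
  lift x to ℕ using hx
  lift y to ℕ using hy
  simp only [Int.natAbs_natCast]
  rcases h with h | h
  · exact jacobiSym.quadratic_reciprocity_one_mod_four (by omega) (by exact_mod_cast hyo)
  · exact jacobiSym.quadratic_reciprocity_one_mod_four' (by exact_mod_cast hxo) (by omega)

section ContinuedFraction

variable (a : ℕ → ℤ)

theorem cfS_add_two (n : ℕ) : cfS a (n + 2) = a (n + 2) * cfS a (n + 1) + cfS a n := rfl

theorem cfT_add_two (n : ℕ) : cfT a (n + 2) = a (n + 2) * cfT a (n + 1) + cfT a n := rfl

theorem cfS_cfT_determinant (n : ℕ) :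
    cfS a (n + 1) * cfT a n - cfT a (n + 1) * cfS a n = (-1) ^ n := by
  induction n with
  | zero => simp [cfS, cfT]
  | succ n ih =>
    rw [cfS_add_two, cfT_add_two, pow_succ]
    linear_combination -ih

variable {a}

theorem cfT_pos (ha : ∀ n, 0 < a (n + 1)) : ∀ n, 0 < cfT a n
  | 0 => one_pos
  | 1 => ha 0
  | n + 2 => by
    rw [cfT_add_two]
    exact add_pos (mul_pos (ha _) (cfT_pos ha _)) (cfT_pos ha n)

theorem cfT_two_mul_emod_four_and_odd (ha1 : Odd (a 1)) (h4 : ∀ m, 4 ∣ a (2 * m + 2))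
    (h2 : ∀ m, Even (a (2 * m + 3))) (m : ℕ) :
    cfT a (2 * m) % 4 = 1 ∧ Odd (cfT a (2 * m + 1)) := by
  induction m with
  | zero => exact ⟨rfl, ha1⟩
  | succ m ih =>
    have hmod : cfT a (2 * (m + 1)) % 4 = 1 := by
      obtain ⟨c, hc⟩ := h4 m
      rw [← ih.1, show 2 * (m + 1) = 2 * m + 2 by ring, cfT_add_two, hc, mul_assoc, add_comm,
        Int.add_mul_emod_self_left]
    refine ⟨hmod, ?_⟩
    rw [show 2 * (m + 1) + 1 = 2 * m + 1 + 2 by ring, cfT_add_two]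
    exact ((h2 m).mul_right _).add_odd ih.2

theorem odd_cfT (ha1 : Odd (a 1)) (h4 : ∀ m, 4 ∣ a (2 * m + 2))
    (h2 : ∀ m, Even (a (2 * m + 3))) (n : ℕ) : Odd (cfT a n) := by
  obtain ⟨m, rfl | rfl⟩ := Nat.even_or_odd' n
  · have := (cfT_two_mul_emod_four_and_odd ha1 h4 h2 m).1
    exact Int.odd_iff.mpr (by omega)
  · exact (cfT_two_mul_emod_four_and_odd ha1 h4 h2 m).2

theorem jacobiSym_cfT_cfT_succ (ha : ∀ n, 0 < a (n + 1)) (hodd : ∀ n, Odd (cfT a n))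
    (hmod : ∀ m, cfT a (2 * m) % 4 = 1) (n : ℕ) :
    jacobiSym (cfT a n) (cfT a (n + 1)).natAbs = 1 := by
  induction n with
  | zero => exact jacobiSym.one_left _
  | succ n ih =>
    have hpos := cfT_pos ha
    have hcast : ((cfT a (n + 1)).natAbs : ℤ) = cfT a (n + 1) := Int.natAbs_of_nonneg (hpos _).le
    have hone : cfT a (n + 1) % 4 = 1 ∨ cfT a (n + 2) % 4 = 1 := by
      obtain ⟨m, rfl | rfl⟩ := Nat.even_or_odd' n
      · exact .inr (by simpa [mul_add] using hmod (m + 1))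
      · exact .inl (by simpa [mul_add] using hmod (m + 1))
    have hred : cfT a (n + 2) % ((cfT a (n + 1)).natAbs : ℤ)
        = cfT a n % ((cfT a (n + 1)).natAbs : ℤ) := by
      rw [cfT_add_two, hcast, add_comm, Int.add_mul_emod_self_right]
    rw [jacobiSym_comm_of_emod_four (hpos _).le (hpos _).le (hodd _) (hodd _) hone,
      jacobiSym.mod_left' hred, ih]

theorem jacobiSym_cfS_cfT (ha : ∀ n, 0 < a (n + 1)) (hodd : ∀ n, Odd (cfT a n))
    (hmod : ∀ m, cfT a (2 * m) % 4 = 1) (n : ℕ) :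
    jacobiSym (cfS a n) (cfT a n).natAbs = 1 := by
  cases n with
  | zero => exact jacobiSym.one_right _
  | succ n =>
    have hcast : ((cfT a (n + 1)).natAbs : ℤ) = cfT a (n + 1) :=
      Int.natAbs_of_nonneg (cfT_pos ha _).le
    have hdet : cfS a (n + 1) * cfT a n % ((cfT a (n + 1)).natAbs : ℤ)
        = (-1) ^ n % ((cfT a (n + 1)).natAbs : ℤ) := by
      rw [← cfS_cfT_determinant, hcast, sub_eq_add_neg, neg_mul_eq_mul_neg,
        Int.add_mul_emod_self_left]
    have hsign := jacobiSym.mod_left' hdet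
    rw [jacobiSym.mul_left, jacobiSym_cfT_cfT_succ ha hodd hmod, mul_one] at hsign
    rw [hsign]
    obtain ⟨m, rfl | rfl⟩ := Nat.even_or_odd' n
    · simp [pow_mul]
    · have h4 : (cfT a (2 * m + 1 + 1)).natAbs % 4 = 1 := by
        have := hmod (m + 1)
        rw [show 2 * (m + 1) = 2 * m + 1 + 1 by ring] at this
        omega
      rw [(odd_two_mul_add_one m).neg_one_pow, jacobiSym.at_neg_one (hodd _).natAbs]
      exact ZMod.χ₄_nat_one_mod_four h4

end ContinuedFraction

theorem jacobi_sequence_all_one_construction_general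
    (kseq : ℕ → ℕ) (heven : ∀ j, 1 ≤ j → Even (kseq j))
    (a : ℕ → ℤ) (ha1 : a 1 = 1)
    (ha2 : ∀ n, 2 ≤ n → (∃ j, 1 ≤ j ∧ (n = kseq j - 1 ∨ n = kseq j + 1)) → a n = 2)
    (ha4 : ∀ n, 2 ≤ n → ¬(∃ j, 1 ≤ j ∧ (n = kseq j - 1 ∨ n = kseq j + 1)) → a n = 4) :
    ∀ n, Odd (cfT a n) ∧ jacobiSym (cfS a n) (cfT a n).natAbs = 1 := by
  have htwo_or_four : ∀ n, a (n + 2) = 2 ∨ a (n + 2) = 4 := fun n => by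
    by_cases h : ∃ j, 1 ≤ j ∧ (n + 2 = kseq j - 1 ∨ n + 2 = kseq j + 1)
    exacts [.inl (ha2 _ (by omega) h), .inr (ha4 _ (by omega) h)]
  have hpos : ∀ n, 0 < a (n + 1)
    | 0 => by rw [ha1]; norm_num
    | n + 1 => by rcases htwo_or_four n with h | h <;> rw [h] <;> norm_num
  have ha_even_idx : ∀ m, 4 ∣ a (2 * m + 2) := fun m => by
    rw [ha4 _ (by omega)]
    rintro ⟨j, hj, hk⟩
    obtain ⟨c, hc⟩ := heven j hj
    omega
  have ha_odd_idx : ∀ m, Even (a (2 * m + 3)) := fun m => by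
    rcases htwo_or_four (2 * m + 1) with h | h <;> rw [h] <;> decide
  have hodd1 : Odd (a 1) := by rw [ha1]; decide
  have hoddT := odd_cfT hodd1 ha_even_idx ha_odd_idx
  have hmod := fun m => (cfT_two_mul_emod_four_and_odd hodd1 ha_even_idx ha_odd_idx m).1
  exact fun n => ⟨hoddT n, jacobiSym_cfS_cfT hpos hoddT hmod n⟩

theorem jacobi_sequence_all_one_construction
    (kseq : ℕ → ℕ) (heven : ∀ j, 1 ≤ j → Even (kseq j)) (h1 : 6 ≤ kseq 1)
    (hgap : ∀ j, 1 ≤ j → kseq j + 6 ≤ kseq (j+1))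
    (a : ℕ → ℤ) (ha0 : a 0 = 1) (ha1 : a 1 = 1)
    (ha2 : ∀ n, 2 ≤ n → (∃ j, 1 ≤ j ∧ (n = kseq j - 1 ∨ n = kseq j + 1)) → a n = 2)
    (ha4 : ∀ n, 2 ≤ n → ¬(∃ j, 1 ≤ j ∧ (n = kseq j - 1 ∨ n = kseq j + 1)) → a n = 4) :
    ∀ n, Odd (cfT a n) ∧ jacobiSym (cfS a n) (cfT a n).natAbs = 1 :=
  jacobi_sequence_all_one_construction_general kseq heven a ha1 ha2 ha4
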